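/- arXiv:2007.05255 — 2 statements merged into one kernel-verified Lean document; each statement's English description precedes it below -/
import Mathlib

section
/- If m is a log-concave measure on ℝⁿ (i.e. dm = e^{−W} dx with W : ℝⁿ → ℝ ∪ {+∞} convex), then for any measurable functions f₀, f₁ : ℝⁿ → ℝ ∪ {+∞} and any t ∈ [0,1], it holds that ∫ e^{−((1−t)f₀ + t f₁)*} dm ≥ (∫ e^{−f₀*} dm)^{1−t} (∫ e^{−f₁*} dm)^{t}, where g*(y) = sup_{x∈ℝⁿ} {x·y − g(x)} denotes the Fenchel–Legendre transform. -/
open MeasureTheory Real Filter Set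
attribute [local instance] Classical.propDecidable
open scoped ENNReal NNReal Topology

noncomputable section

/-- `ℝⁿ` as a Euclidean space. -/
abbrev En (n : ℕ) : Type := EuclideanSpace ℝ (Fin n)

/-- `exp(-t)` for an extended real `t`, valued in `ℝ≥0∞`. -/
def expNeg (t : EReal) : ℝ≥0∞ :=
  if t = ⊥ then ⊤ else if t = ⊤ then 0 else ENNReal.ofReal (Real.exp (-t.toReal))

/-- Convexity for `EReal`-valued functions on `ℝⁿ`. -/
def ConvexE {n : ℕ} (f : En n → EReal) : Prop :=
  ∀ x y : En n, ∀ t : ℝ, 0 ≤ t → t ≤ 1 →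
    f (t • x + (1 - t) • y) ≤ (t : EReal) * f x + ((1 - t : ℝ) : EReal) * f y

/-- The class `F(ℝⁿ)`: proper lower semicontinuous convex functions `ℝⁿ → ℝ ∪ {+∞}`. -/
def IsF {n : ℕ} (f : En n → EReal) : Prop :=
  LowerSemicontinuous f ∧ ConvexE f ∧ (∃ x, f x ≠ ⊤) ∧ (∀ x, f x ≠ ⊥)

/-- Fenchel–Legendre transform. -/
def legendre {n : ℕ} (f : En n → EReal) : En n → EReal :=
  fun y => ⨆ x : En n, ((inner ℝ x y : ℝ) : EReal) - f x

/-- `∫ e^{-f} dm`, valued in `ℝ≥0∞`. -/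
def intExpNeg {n : ℕ} (m : Measure (En n)) (f : En n → EReal) : ℝ≥0∞ :=
  ∫⁻ x, expNeg (f x) ∂m

/-- Extended-real logarithm of an `ℝ≥0∞` number. -/
def elog (x : ℝ≥0∞) : EReal :=
  if x = 0 then ⊥ else if x = ⊤ then ⊤ else ((Real.log x.toReal : ℝ) : EReal)

/-- Positive part of an extended real, as an element of `ℝ≥0∞`. -/
def posPart (x : EReal) : ℝ≥0∞ := if x = ⊤ then ⊤ else ENNReal.ofReal x.toReal

/-- Extended-valued integral `∫ f dμ := ∫ f⁺ dμ - ∫ f⁻ dμ`. -/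
def eInt {n : ℕ} (μ : Measure (En n)) (f : En n → EReal) : EReal :=
  ((∫⁻ x, posPart (f x) ∂μ : ℝ≥0∞) : EReal) - ((∫⁻ x, posPart (-f x) ∂μ : ℝ≥0∞) : EReal)

/-- Probability measures with finite first moment. -/
def MemP1 {n : ℕ} (ν : Measure (En n)) : Prop :=
  IsProbabilityMeasure ν ∧ ∫⁻ x, (‖x‖₊ : ℝ≥0∞) ∂ν ≠ ⊤

/-- Probability measures with finite second moment. -/
def MemP2 {n : ℕ} (ν : Measure (En n)) : Prop :=
  IsProbabilityMeasure ν ∧ ∫⁻ x, (‖x‖₊ : ℝ≥0∞) ^ 2 ∂ν ≠ ⊤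

/-- A measure is compactly supported. -/
def HasCompactSupportMeasure {n : ℕ} (ν : Measure (En n)) : Prop :=
  ∃ K : Set (En n), IsCompact K ∧ ν Kᶜ = 0

/-- Coordinate sign flip of a point of `ℝⁿ`. -/
def signFlip {n : ℕ} (ε : Fin n → Bool) (x : En n) : En n :=
  (EuclideanSpace.equiv (Fin n) ℝ).symm (fun i => if ε i then x i else -x i)

/-- Unconditional function. -/
def UncondFun {n : ℕ} (f : En n → EReal) : Prop := ∀ ε x, f (signFlip ε x) = f x

/-- Symmetric function. -/
def SymmFun {n : ℕ} (f : En n → EReal) : Prop := ∀ x, f (-x) = f x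

/-- Unconditional measure. -/
def UncondMeas {n : ℕ} (ν : Measure (En n)) : Prop := ∀ ε, Measure.map (signFlip ε) ν = ν

/-- Symmetric measure. -/
def SymmMeas {n : ℕ} (ν : Measure (En n)) : Prop := Measure.map (fun x => -x) ν = ν

/-- The functional `K(ν|m) = sup { ∫(-f) dν + log ∫ e^{-f*} dm : f ∈ L¹(ν) ∩ F(ℝⁿ) }`. -/
def Kfun {n : ℕ} (ν m : Measure (En n)) : EReal :=
  ⨆ (f : En n → EReal) (_ : IsF f ∧ (∀ᵐ x ∂ν, f x ≠ ⊤) ∧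
      Integrable (fun x => (f x).toReal) ν),
    ((-(∫ x, (f x).toReal ∂ν) : ℝ) : EReal) + elog (intExpNeg m (legendre f))

/-- Maximal correlation transport cost `T(ν₁, ν₂)`. -/
def Tcost {n : ℕ} (ν₁ ν₂ : Measure (En n)) : EReal :=
  ⨅ (f : En n → EReal) (_ : IsF f), eInt ν₁ f + eInt ν₂ (legendre f)

/-- Relative entropy `H(η|m)`, equal to `+∞` when `η` is not absolutely continuous w.r.t. `m`. -/
def relEnt {n : ℕ} (η m : Measure (En n)) : EReal :=
  if η ≪ m then eInt η (fun x => ((Real.log (η.rnDeriv m x).toReal : ℝ) : EReal)) else ⊤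

/-- The standard Gaussian measure on `ℝⁿ`. -/
def stdGaussian (n : ℕ) : Measure (En n) :=
  volume.withDensity fun x =>
    ENNReal.ofReal ((2 * Real.pi) ^ (-(n : ℝ) / 2) * Real.exp (-‖x‖ ^ 2 / 2))

/-- Squared `2`-Wasserstein distance. -/
def W2sq {n : ℕ} (μ ν : Measure (En n)) : ℝ≥0∞ :=
  ⨅ (p : Measure (En n × En n)) (_ : p.map Prod.fst = μ ∧ p.map Prod.snd = ν),
    ∫⁻ q, (‖q.1 - q.2‖₊ : ℝ≥0∞) ^ 2 ∂p

/-- Absolute continuity of `g : ℝ → ℝ` on `[a, b]` (FTC characterization). -/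
def ACOn (g : ℝ → ℝ) (a b : ℝ) : Prop :=
  IntegrableOn (deriv g) (Set.Icc a b) ∧
    ∀ x ∈ Set.Icc a b, g x - g a = ∫ t in a..x, deriv g t

/-- The point of `ℝⁿ` obtained by replacing the `i`-th coordinate of `x` by `t`. -/
def updCoord {n : ℕ} (x : En n) (i : Fin n) (t : ℝ) : En n :=
  (EuclideanSpace.equiv (Fin n) ℝ).symm
    (Function.update ((EuclideanSpace.equiv (Fin n) ℝ) x) i t)

/-- Absolute continuity on almost every line parallel to a coordinate axis. -/
def ACL {n : ℕ} (g : En n → ℝ) : Prop :=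
  ∀ i : Fin n, ∀ᵐ x ∂(volume : Measure (En n)),
    ∀ a b : ℝ, ACOn (fun t => g (updCoord x i t)) a b

/-- Squared norm of the coordinate-wise a.e. gradient, via line derivatives. -/
def gradSq {n : ℕ} (g : En n → ℝ) (x : En n) : ℝ :=
  ∑ i : Fin n, (lineDeriv ℝ g x (EuclideanSpace.single i 1)) ^ 2

/-- Relative Fisher information `I(η|γ) = 4 ∫ |∇ √h|² dγ` where `h = dη/dγ`;
`+∞` unless `√h` is absolutely continuous on almost every line parallel to an axis. -/
def fisherInfo {n : ℕ} (η γ : Measure (En n)) : ℝ≥0∞ :=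
  if η ≪ γ ∧ ACL (fun x => Real.sqrt (η.rnDeriv γ x).toReal) then
    4 * ∫⁻ x, ENNReal.ofReal (gradSq (fun y => Real.sqrt (η.rnDeriv γ y).toReal) x) ∂γ
  else ⊤

/-- Deficit in the Gaussian logarithmic Sobolev inequality. -/
def lsDeficit {n : ℕ} (η : Measure (En n)) : EReal :=
  ((1 / 2 : ℝ) : EReal) * ((fisherInfo η (stdGaussian n) : ℝ≥0∞) : EReal)
    - relEnt η (stdGaussian n)

/-- Moment measure `∇V_# η` of a log-concave measure `η = e^{-V} dx`. -/
def momentMeasure {n : ℕ} (V : En n → EReal) (η : Measure (En n)) : Measure (En n) :=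
  Measure.map (fun x => gradient (fun y => (V y).toReal) x) η

/-- Essential continuity of a convex function. -/
def EssCont {n : ℕ} (V : En n → EReal) : Prop :=
  μH[(n : ℝ) - 1] {x : En n | x ∈ frontier {y | V y ≠ ⊤} ∧ V x ≠ ⊤} = 0

/-- The functional inverse Santaló inequality with constant `c`, restricted to a class `P`. -/
def InvSantaloOn {n : ℕ} (c : ℝ) (P : (En n → EReal) → Prop) : Prop :=
  ∀ f : En n → EReal, IsF f → P f →
    0 < intExpNeg volume f → 0 < intExpNeg volume (legendre f) →
    ENNReal.ofReal c ^ n ≤ intExpNeg volume f * intExpNeg volume (legendre f)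

/-- The functional inverse Santaló inequality `IS_n(c)`. -/
def InvSantalo (n : ℕ) (c : ℝ) : Prop := InvSantaloOn (n := n) c fun _ => True

/-- The symmetric functional inverse Santaló inequality `IS_{n,s}(c)`. -/
def InvSantaloSymm (n : ℕ) (c : ℝ) : Prop := InvSantaloOn (n := n) c SymmFun

/-- The unconditional functional inverse Santaló inequality `IS_{n,u}(c)`. -/
def InvSantaloUncond (n : ℕ) (c : ℝ) : Prop := InvSantaloOn (n := n) c UncondFun


/-! For `z = (1 - t) y₀ + t y₁`, testing the supremum defining `((1 - t) f₀ + t f₁)*(z)` at each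
point gives `((1 - t) f₀ + t f₁)*(z) ≤ (1 - t) f₀*(y₀) + t f₁*(y₁)`. Together with the convexity
of `W`, this says that `e^{-W - f₀*}`, `e^{-W - f₁*}` and `e^{-W - ((1 - t) f₀ + t f₁)*}` satisfy
the hypothesis of the Prékopa–Leindler inequality, which is the claim.

Prékopa–Leindler on `ℝ` follows from the one-dimensional Brunn–Minkowski inequality applied to
the superlevel sets of the functions normalized by their suprema, integrated via the layer-cake
formula; it passes to `ℝⁿ` because it is stable under products of measures. -/

lemma ENNReal.rpow_mul_rpow_le_add {s : ℝ} (hs0 : 0 < s) (hs1 : s < 1) (a b : ℝ≥0∞) :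
    a ^ (1 - s) * b ^ s ≤ ENNReal.ofReal (1 - s) * a + ENNReal.ofReal s * b := by
  rcases eq_or_ne a ∞ with rfl | ha
  · simp [ENNReal.mul_top, hs1]
  rcases eq_or_ne b ∞ with rfl | hb
  · simp [ENNReal.mul_top, hs0]
  rw [← ENNReal.ofReal_toReal ha, ← ENNReal.ofReal_toReal hb,
    ENNReal.ofReal_rpow_of_nonneg ENNReal.toReal_nonneg (by linarith),
    ENNReal.ofReal_rpow_of_nonneg ENNReal.toReal_nonneg hs0.le,
    ← ENNReal.ofReal_mul (by positivity), ← ENNReal.ofReal_mul (by linarith), ← ENNReal.ofReal_mul hs0.le,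
    ← ENNReal.ofReal_add (by positivity) (by positivity)]
  exact ENNReal.ofReal_le_ofReal (Real.geom_mean_le_arith_mean2_weighted (by linarith) hs0.le
    ENNReal.toReal_nonneg ENNReal.toReal_nonneg (by ring))

lemma ENNReal.ofReal_mul_rpow_mul_rpow_lt {s l : ℝ} (hs0 : 0 < s) (hs1 : s < 1) (hl : 0 < l)
    {a b u v : ℝ≥0∞} (hu : ENNReal.ofReal l * a < u) (hv : ENNReal.ofReal l * b < v) :
    ENNReal.ofReal l * (a ^ (1 - s) * b ^ s) < u ^ (1 - s) * v ^ s := by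
  have hl' : ENNReal.ofReal l = ENNReal.ofReal l ^ (1 - s) * ENNReal.ofReal l ^ s := by
    rw [← ENNReal.rpow_add _ _ (ENNReal.ofReal_pos.2 hl).ne' ENNReal.ofReal_ne_top, sub_add_cancel,
      ENNReal.rpow_one]
  calc ENNReal.ofReal l * (a ^ (1 - s) * b ^ s)
      = (ENNReal.ofReal l * a) ^ (1 - s) * (ENNReal.ofReal l * b) ^ s := by
        rw [ENNReal.mul_rpow_of_nonneg _ _ (by linarith), ENNReal.mul_rpow_of_nonneg _ _ hs0.le]
        conv_lhs => rw [hl']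
        ring
    _ < u ^ (1 - s) * v ^ s :=
        ENNReal.mul_lt_mul (ENNReal.rpow_lt_rpow hu (by linarith)) (ENNReal.rpow_lt_rpow hv hs0)

lemma lintegral_eq_mul_setLIntegral_Ioo_measure_lt {α : Type*} [MeasurableSpace α]
    (μ : Measure α) {Φ : α → ℝ≥0∞} (hΦ : Measurable Φ) {M : ℝ≥0∞} (hM : M ≠ ∞)
    (hΦM : ∀ x, Φ x ≤ M) :
    ∫⁻ x, Φ x ∂μ = M * ∫⁻ l in Ioo 0 1, μ {x | ENNReal.ofReal l * M < Φ x} := by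
  rcases eq_or_ne M 0 with rfl | hM0
  · simp [fun x => le_zero_iff.1 (hΦM x)]
  -- layer cake for the normalized function `Φ / M ≤ 1`
  have hnorm (x : α) : Φ x = M * ENNReal.ofReal (Φ x / M).toReal := by
    rw [ENNReal.ofReal_toReal (ENNReal.div_ne_top (ne_top_of_le_ne_top hM (hΦM x)) hM0),
      ENNReal.mul_div_cancel hM0 hM]
  have hlevel {l : ℝ} (hl : 0 ≤ l) :
      {x | l < (Φ x / M).toReal} = {x | ENNReal.ofReal l * M < Φ x} := by
    ext x
    rw [mem_ofPred_eq, mem_ofPred_eq, ← ENNReal.ofReal_lt_iff_lt_toReal hl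
      (ENNReal.div_ne_top (ne_top_of_le_ne_top hM (hΦM x)) hM0), ENNReal.lt_div_iff_mul_lt
      (.inl hM0) (.inl hM)]
  have hempty {l : ℝ} (hl : 1 ≤ l) : {x | ENNReal.ofReal l * M < Φ x} = ∅ :=
    eq_empty_of_forall_notMem fun x hx => (hx.trans_le (hΦM x)).not_ge
      (le_mul_of_one_le_left' (ENNReal.one_le_ofReal.2 hl))
  rw [lintegral_congr hnorm, lintegral_const_mul _ (hΦ.div_const M).ennreal_toReal.ennreal_ofReal,
    lintegral_eq_lintegral_meas_lt μ (.of_forall fun _ => ENNReal.toReal_nonneg)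
      (hΦ.div_const M).ennreal_toReal.aemeasurable, ← Ioo_union_Ici_eq_Ioi zero_lt_one,
    lintegral_union measurableSet_Ici ((Iio_disjoint_Ici le_rfl).mono_left Ioo_subset_Iio_self),
    setLIntegral_congr_fun measurableSet_Ici fun l hl => by
      rw [hlevel (zero_le_one.trans hl), hempty hl],
    setLIntegral_congr_fun measurableSet_Ioo fun l hl => by rw [hlevel hl.1.le]]
  simp

namespace Real

lemma exists_mem_lt_volume_inter_Iio {A : Set ℝ} (hA : MeasurableSet A) {r : ℝ≥0∞}
    (hr : r < volume A) : ∃ a ∈ A, r < volume (A ∩ Iio a) := by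
  obtain ⟨K, hKA, hK, hrK⟩ := hA.exists_lt_isCompact hr
  have hKne : K.Nonempty := nonempty_iff_ne_empty.2 fun h => by simp [h] at hrK
  refine ⟨sSup K, hKA (hK.sSup_mem hKne), hrK.trans_le ?_⟩
  rw [← measure_sdiff_null (t := {sSup K}) Real.volume_singleton]
  exact measure_mono fun x ⟨hxK, hx⟩ =>
    ⟨hKA hxK, (le_csSup hK.bddAbove hxK).lt_of_ne (by simpa using hx)⟩

lemma exists_mem_lt_volume_inter_Ici {B : Set ℝ} (hB : MeasurableSet B) {r : ℝ≥0∞}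
    (hr : r < volume B) : ∃ b ∈ B, r < volume (B ∩ Ici b) := by
  obtain ⟨K, hKB, hK, hrK⟩ := hB.exists_lt_isCompact hr
  have hKne : K.Nonempty := nonempty_iff_ne_empty.2 fun h => by simp [h] at hrK
  exact ⟨sInf K, hKB (hK.sInf_mem hKne),
    hrK.trans_le (measure_mono fun x hx => ⟨hKB hx, csInf_le hK.bddBelow hx⟩)⟩

open scoped Pointwise in
lemma brunnMinkowski {s : ℝ} (hs0 : 0 < s) (hs1 : s < 1) {A B C : Set ℝ}
    (hA : MeasurableSet A) (hB : MeasurableSet B) (hAne : A.Nonempty) (hBne : B.Nonempty)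
    (hABC : ∀ a ∈ A, ∀ b ∈ B, (1 - s) * a + s * b ∈ C) :
    ENNReal.ofReal (1 - s) * volume A + ENNReal.ofReal s * volume B ≤ volume C := by
  -- Cutting `A` at `a ∈ A` and `B` at `b ∈ B`, the two pieces land in `C` on either side of
  -- `(1 - s) * a + s * b`; then let the cuts exhaust `A` and `B`.
  have hcut : ∀ a ∈ A, ∀ b ∈ B,
      ENNReal.ofReal (1 - s) * volume (A ∩ Iio a) + ENNReal.ofReal s * volume (B ∩ Ici b)
        ≤ volume C := by
    intro a ha b hb
    set z := (1 - s) * a + s * b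
    have hlow : (s * b) +ᵥ (1 - s) • (A ∩ Iio a) ⊆ C ∩ Iio z := by
      rintro _ ⟨_, ⟨w, ⟨hwA, hwa⟩, rfl⟩, rfl⟩
      refine ⟨by simpa [add_comm] using hABC w hwA b hb, ?_⟩
      simp only [smul_eq_mul, vadd_eq_add, mem_Iio, z]
      nlinarith [mem_Iio.1 hwa]
    have hhigh : ((1 - s) * a) +ᵥ s • (B ∩ Ici b) ⊆ C ∩ Ici z := by
      rintro _ ⟨_, ⟨w, ⟨hwB, hwb⟩, rfl⟩, rfl⟩
      refine ⟨hABC a ha w hwB, ?_⟩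
      simp only [smul_eq_mul, vadd_eq_add, mem_Ici, z]
      nlinarith [mem_Ici.1 hwb]
    calc ENNReal.ofReal (1 - s) * volume (A ∩ Iio a) + ENNReal.ofReal s * volume (B ∩ Ici b)
        = volume ((s * b) +ᵥ (1 - s) • (A ∩ Iio a))
            + volume (((1 - s) * a) +ᵥ s • (B ∩ Ici b)) := by
          simp only [measure_vadd, Measure.addHaar_smul, Module.finrank_self, pow_one,
            abs_of_pos hs0, abs_of_pos (sub_pos.2 hs1)]
      _ ≤ volume (C ∩ Iio z) + volume (C \ Iio z) := by
          gcongr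
          exact hhigh.trans fun x ⟨hxC, hx⟩ => ⟨hxC, not_lt.2 (mem_Ici.1 hx)⟩
      _ = volume C := measure_inter_add_sdiff C measurableSet_Iio
  have : Nonempty A := hAne.to_subtype
  have : Nonempty B := hBne.to_subtype
  calc ENNReal.ofReal (1 - s) * volume A + ENNReal.ofReal s * volume B
      ≤ (⨆ a : A, ENNReal.ofReal (1 - s) * volume (A ∩ Iio (a : ℝ)))
        + ⨆ b : B, ENNReal.ofReal s * volume (B ∩ Ici (b : ℝ)) := by
        rw [← ENNReal.mul_iSup, ← ENNReal.mul_iSup]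
        gcongr
        · refine le_of_forall_lt fun r hr => ?_
          obtain ⟨a, ha, hra⟩ := exists_mem_lt_volume_inter_Iio hA hr
          exact hra.trans_le (le_iSup (fun a : A => volume (A ∩ Iio (a : ℝ))) ⟨a, ha⟩)
        · refine le_of_forall_lt fun r hr => ?_
          obtain ⟨b, hb, hrb⟩ := exists_mem_lt_volume_inter_Ici hB hr
          exact hrb.trans_le (le_iSup (fun b : B => volume (B ∩ Ici (b : ℝ))) ⟨b, hb⟩)
    _ ≤ volume C := ENNReal.iSup_add_iSup_le fun a b => hcut a a.2 b b.2

end Real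

lemma lintegral_eq_iSup_lintegral_min_natCast {α : Type*} [MeasurableSpace α] (μ : Measure α)
    {F : α → ℝ≥0∞} (hF : Measurable F) : ∫⁻ x, F x ∂μ = ⨆ k : ℕ, ∫⁻ x, min (F x) k ∂μ := by
  rw [← lintegral_iSup (fun k => hF.min measurable_const)
    fun i j hij x => min_le_min_left _ (Nat.cast_le.2 hij)]
  congr 1 with x
  rw [← inf_iSup_eq, ENNReal.iSup_natCast, inf_top_eq]

lemma ENNReal.iSup_rpow {ι : Sort*} (f : ι → ℝ≥0∞) {p : ℝ} (hp : 0 < p) :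
    (⨆ i, f i) ^ p = ⨆ i, f i ^ p :=
  (ENNReal.orderIsoRpow p hp).map_iSup f

section PrekopaLeindler

variable {E E' : Type*} [AddCommGroup E] [Module ℝ E] [MeasurableSpace E]
  [AddCommGroup E'] [Module ℝ E'] [MeasurableSpace E']

def PrekopaLeindler (μ : Measure E) : Prop :=
  ∀ ⦃s : ℝ⦄, 0 < s → s < 1 → ∀ ⦃F G H : E → ℝ≥0∞⦄, Measurable F → Measurable G → Measurable H →
    (∀ x y, F x ^ (1 - s) * G y ^ s ≤ H ((1 - s) • x + s • y)) →
    (∫⁻ x, F x ∂μ) ^ (1 - s) * (∫⁻ x, G x ∂μ) ^ s ≤ ∫⁻ x, H x ∂μ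

lemma prekopaLeindler_of_bounded {μ : Measure E}
    (h : ∀ ⦃s : ℝ⦄, 0 < s → s < 1 → ∀ ⦃F G H : E → ℝ≥0∞⦄,
      Measurable F → Measurable G → Measurable H → ⨆ x, F x ≠ ∞ → ⨆ x, G x ≠ ∞ →
      (∀ x y, F x ^ (1 - s) * G y ^ s ≤ H ((1 - s) • x + s • y)) →
      (∫⁻ x, F x ∂μ) ^ (1 - s) * (∫⁻ x, G x ∂μ) ^ s ≤ ∫⁻ x, H x ∂μ) :
    PrekopaLeindler μ := by
  intro s hs0 hs1 F G H hF hG hH hFGH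
  have bdd (k : ℕ) (F : E → ℝ≥0∞) : ⨆ x, min (F x) k ≠ ∞ :=
    ne_top_of_le_ne_top (ENNReal.natCast_ne_top k) (iSup_le fun _ => min_le_right _ _)
  rw [lintegral_eq_iSup_lintegral_min_natCast μ hF, lintegral_eq_iSup_lintegral_min_natCast μ hG,
    ENNReal.iSup_rpow _ (sub_pos.2 hs1), ENNReal.iSup_rpow _ hs0, ENNReal.iSup_mul]
  refine iSup_le fun k => ?_
  rw [ENNReal.mul_iSup]
  refine iSup_le fun j => h hs0 hs1 (hF.min measurable_const) (hG.min measurable_const) hH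
    (bdd k F) (bdd j G) fun x y => (mul_le_mul' ?_ ?_).trans (hFGH x y)
  · exact ENNReal.rpow_le_rpow (min_le_left _ _) (sub_pos.2 hs1).le
  · exact ENNReal.rpow_le_rpow (min_le_left _ _) hs0.le

lemma PrekopaLeindler.of_measurePreserving {μ : Measure E} {ν : Measure E'}
    (h : PrekopaLeindler μ) (e : E →ₗ[ℝ] E') (he : MeasurePreserving e μ ν) :
    PrekopaLeindler ν := by
  intro s hs0 hs1 F G H hF hG hH hFGH
  rw [← he.lintegral_comp hF, ← he.lintegral_comp hG, ← he.lintegral_comp hH]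
  refine h hs0 hs1 (hF.comp he.measurable) (hG.comp he.measurable) (hH.comp he.measurable)
    fun x y => ?_
  simpa only [Function.comp_apply, map_add, map_smul] using hFGH (e x) (e y)

lemma PrekopaLeindler.prod {μ : Measure E} {ν : Measure E'} [SFinite μ] [SFinite ν]
    (hμ : PrekopaLeindler μ) (hν : PrekopaLeindler ν) : PrekopaLeindler (μ.prod ν) := by
  intro s hs0 hs1 F G H hF hG hH hFGH
  rw [lintegral_prod_symm' _ hF, lintegral_prod_symm' _ hG, lintegral_prod_symm' _ hH]
  refine hν hs0 hs1 hF.lintegral_prod_left' hG.lintegral_prod_left' hH.lintegral_prod_left'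
    fun y₀ y₁ => hμ hs0 hs1 (hF.comp measurable_prodMk_right) (hG.comp measurable_prodMk_right)
      (hH.comp measurable_prodMk_right) fun x₀ x₁ => hFGH (x₀, y₀) (x₁, y₁)

end PrekopaLeindler

lemma prekopaLeindler_volume_real : PrekopaLeindler (volume : Measure ℝ) := by
  refine prekopaLeindler_of_bounded fun s hs0 hs1 F G H hF hG hH hFb hGb hFGH => ?_
  have h1s : 0 < 1 - s := sub_pos.2 hs1
  set a := ⨆ x, F x
  set b := ⨆ x, G x
  rcases eq_or_ne a 0 with ha0 | ha0
  · have hF0 (x : ℝ) : F x = 0 := le_zero_iff.1 ((le_iSup F x).trans ha0.le)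
    simp [hF0, ENNReal.zero_rpow_of_pos h1s]
  rcases eq_or_ne b 0 with hb0 | hb0
  · have hG0 (x : ℝ) : G x = 0 := le_zero_iff.1 ((le_iSup G x).trans hb0.le)
    simp [hG0, ENNReal.zero_rpow_of_pos hs0]
  set c := a ^ (1 - s) * b ^ s
  have hc : c ≠ ∞ := ENNReal.mul_ne_top (ENNReal.rpow_ne_top_of_nonneg h1s.le hFb)
    (ENNReal.rpow_ne_top_of_nonneg hs0.le hGb)
  have hc0 : c ≠ 0 := mul_ne_zero (ENNReal.rpow_pos (pos_iff_ne_zero.2 ha0) hFb).ne'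
    (ENNReal.rpow_pos (pos_iff_ne_zero.2 hb0) hGb).ne'
  have hlt {l : ℝ} (hl : l < 1) {M : ℝ≥0∞} (hM0 : M ≠ 0) (hM : M ≠ ∞) : ENNReal.ofReal l * M < M :=
    (ENNReal.mul_lt_mul_left hM0 hM (ENNReal.ofReal_lt_one.2 hl)).trans_eq (one_mul M)
  have hlevel : ∀ l ∈ Ioo (0 : ℝ) 1,
      ENNReal.ofReal (1 - s) * volume {x | ENNReal.ofReal l * a < F x}
        + ENNReal.ofReal s * volume {x | ENNReal.ofReal l * b < G x}
        ≤ volume {x | ENNReal.ofReal l * c < min (H x) c} := by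
    rintro l ⟨hl0, hl1⟩
    refine Real.brunnMinkowski hs0 hs1 (measurableSet_lt measurable_const hF)
      (measurableSet_lt measurable_const hG) (lt_iSup_iff.1 (hlt hl1 ha0 hFb))
      (lt_iSup_iff.1 (hlt hl1 hb0 hGb)) fun x hx y hy => ?_
    exact lt_min ((ENNReal.ofReal_mul_rpow_mul_rpow_lt hs0 hs1 hl0 hx hy).trans_le (hFGH x y))
      (hlt hl1 hc0 hc)
  calc (∫⁻ x, F x) ^ (1 - s) * (∫⁻ x, G x) ^ s
      = c * ((∫⁻ l in Ioo 0 1, volume {x | ENNReal.ofReal l * a < F x}) ^ (1 - s)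
          * (∫⁻ l in Ioo 0 1, volume {x | ENNReal.ofReal l * b < G x}) ^ s) := by
        rw [lintegral_eq_mul_setLIntegral_Ioo_measure_lt volume hF hFb (le_iSup F),
          lintegral_eq_mul_setLIntegral_Ioo_measure_lt volume hG hGb (le_iSup G),
          ENNReal.mul_rpow_of_nonneg _ _ h1s.le, ENNReal.mul_rpow_of_nonneg _ _ hs0.le]
        ring
    _ ≤ c * (ENNReal.ofReal (1 - s) * (∫⁻ l in Ioo 0 1, volume {x | ENNReal.ofReal l * a < F x})
          + ENNReal.ofReal s * ∫⁻ l in Ioo 0 1, volume {x | ENNReal.ofReal l * b < G x}) := by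
        gcongr c * ?_
        exact ENNReal.rpow_mul_rpow_le_add hs0 hs1 _ _
    _ ≤ c * ∫⁻ l in Ioo 0 1, volume {x | ENNReal.ofReal l * c < min (H x) c} := by
        rw [← lintegral_const_mul' _ _ ENNReal.ofReal_ne_top,
          ← lintegral_const_mul' _ _ ENNReal.ofReal_ne_top]
        gcongr c * ?_
        exact (le_lintegral_add _ _).trans
          (lintegral_mono_ae ((ae_restrict_iff' measurableSet_Ioo).2 (.of_forall hlevel)))
    _ = ∫⁻ x, min (H x) c := (lintegral_eq_mul_setLIntegral_Ioo_measure_lt volume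
          (hH.min measurable_const) hc fun _ => min_le_right _ _).symm
    _ ≤ ∫⁻ x, H x := lintegral_mono fun _ => min_le_left _ _

lemma prekopaLeindler_volume_pi (n : ℕ) : PrekopaLeindler (volume : Measure (Fin n → ℝ)) := by
  induction n with
  | zero =>
    intro s hs0 hs1 F G H _ _ _ hFGH
    simp only [lintegral_unique, volume_pi, Measure.pi_univ, Finset.univ_eq_empty,
      Finset.prod_empty, mul_one]
    convert hFGH default default
  | succ n ih =>
    have hcons : ⇑(Fin.consLinearEquiv ℝ fun _ : Fin (n + 1) => ℝ).toLinearMap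
        = (MeasurableEquiv.piFinSuccAbove (fun _ : Fin (n + 1) => ℝ) 0).symm :=
      funext fun p => (Fin.insertNth_zero' p.1 p.2).symm
    have he : MeasurePreserving (Fin.consLinearEquiv ℝ fun _ : Fin (n + 1) => ℝ).toLinearMap
        ((volume : Measure ℝ).prod volume) volume := by
      rw [hcons]
      exact (measurePreserving_piFinSuccAbove (fun _ => volume) 0).symm
    exact (prekopaLeindler_volume_real.prod ih).of_measurePreserving _ he

lemma prekopaLeindler_volume_euclideanSpace (n : ℕ) :
    PrekopaLeindler (volume : Measure (EuclideanSpace ℝ (Fin n))) :=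
  (prekopaLeindler_volume_pi n).of_measurePreserving
    (WithLp.linearEquiv 2 ℝ (Fin n → ℝ)).symm.toLinearMap (PiLp.volume_preserving_toLp _)

lemma expNeg_coe (r : ℝ) : expNeg r = ENNReal.ofReal (Real.exp (-r)) := by
  simp [expNeg]

lemma expNeg_antitone : Antitone expNeg := by
  intro a b hab
  induction a using EReal.rec with
  | bot => simp [expNeg]
  | top => simp [top_le_iff.1 hab, expNeg]
  | coe r =>
    induction b using EReal.rec with
    | bot => simp at hab
    | top => simp [expNeg]
    | coe q =>
      rw [expNeg_coe, expNeg_coe]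
      gcongr
      exact_mod_cast hab

lemma measurable_expNeg : Measurable expNeg := expNeg_antitone.measurable

lemma expNeg_rpow_mul_rpow_le {t : ℝ} (ht0 : 0 < t) (ht1 : t < 1) (a b : EReal) :
    expNeg a ^ (1 - t) * expNeg b ^ t ≤ expNeg (((1 - t : ℝ) : EReal) * a + (t : EReal) * b) := by
  have h1t : 0 < 1 - t := by linarith
  induction a using EReal.rec with
  | bot =>
    rw [EReal.mul_bot_of_pos (EReal.coe_pos.2 h1t), EReal.bot_add]
    simp [expNeg]
  | top => simp [expNeg, ENNReal.zero_rpow_of_pos h1t]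
  | coe u =>
    induction b using EReal.rec with
    | bot =>
      rw [EReal.mul_bot_of_pos (EReal.coe_pos.2 ht0), EReal.add_bot]
      simp [expNeg]
    | top => simp [expNeg, ENNReal.zero_rpow_of_pos ht0]
    | coe v =>
      rw [← EReal.coe_mul, ← EReal.coe_mul, ← EReal.coe_add, expNeg_coe, expNeg_coe, expNeg_coe,
        ENNReal.ofReal_rpow_of_pos (Real.exp_pos _), ENNReal.ofReal_rpow_of_pos (Real.exp_pos _),
        ← ENNReal.ofReal_mul (by positivity), ← Real.exp_mul, ← Real.exp_mul, ← Real.exp_add]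
      exact ENNReal.ofReal_le_ofReal (Real.exp_le_exp.2 (by linarith))

lemma EReal.coe_sub_convexComb_le {t : ℝ} (ht0 : 0 < t) (ht1 : t < 1) (r₀ r₁ : ℝ) {u v : EReal}
    (hu : u ≠ ⊥) (hv : v ≠ ⊥) :
    (((1 - t) * r₀ + t * r₁ : ℝ) : EReal) - (((1 - t : ℝ) : EReal) * u + (t : EReal) * v)
      ≤ ((1 - t : ℝ) : EReal) * (r₀ - u) + (t : EReal) * (r₁ - v) := by
  have h1t : 0 < 1 - t := by linarith
  induction u using EReal.rec with
  | bot => exact absurd rfl hu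
  | top =>
    rw [EReal.mul_top_of_pos (EReal.coe_pos.2 h1t), EReal.top_add_of_ne_bot, EReal.sub_top]
    · exact bot_le
    · induction v using EReal.rec with
      | bot => exact absurd rfl hv
      | top => simp [EReal.mul_top_of_pos (EReal.coe_pos.2 ht0)]
      | coe v => exact_mod_cast EReal.coe_ne_bot _
  | coe u =>
    induction v using EReal.rec with
    | bot => exact absurd rfl hv
    | top =>
      rw [EReal.mul_top_of_pos (EReal.coe_pos.2 ht0), ← EReal.coe_mul, EReal.coe_add_top,
        EReal.sub_top]
      exact bot_le
    | coe v =>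
      norm_cast
      linarith

lemma lowerSemicontinuous_legendre {n : ℕ} (f : En n → EReal) :
    LowerSemicontinuous (legendre f) :=
  lowerSemicontinuous_iSup fun x => Continuous.lowerSemicontinuous <|
    continuous_iff_continuousAt.2 fun y =>
      (EReal.continuousAt_add (by simp) (by simp)).comp
        ((continuous_coe_real_ereal.comp (continuous_const.inner continuous_id)).prodMk
          continuous_const).continuousAt

lemma legendre_convexComb_le {n : ℕ} {t : ℝ} (ht0 : 0 < t) (ht1 : t < 1) {f₀ f₁ : En n → EReal}
    (hb₀ : ∀ x, f₀ x ≠ ⊥) (hb₁ : ∀ x, f₁ x ≠ ⊥) (y₀ y₁ : En n) :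
    legendre (fun x => ((1 - t : ℝ) : EReal) * f₀ x + (t : EReal) * f₁ x) ((1 - t) • y₀ + t • y₁)
      ≤ ((1 - t : ℝ) : EReal) * legendre f₀ y₀ + (t : EReal) * legendre f₁ y₁ := by
  refine iSup_le fun x => ?_
  rw [inner_add_right, real_inner_smul_right, real_inner_smul_right]
  refine (EReal.coe_sub_convexComb_le ht0 ht1 _ _ (hb₀ x) (hb₁ x)).trans ?_
  gcongr
  · exact le_iSup (fun x => ((inner ℝ x y₀ : ℝ) : EReal) - f₀ x) x
  · exact le_iSup (fun x => ((inner ℝ x y₁ : ℝ) : EReal) - f₁ x) x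

namespace ConvexE

variable {n : ℕ} {W : En n → EReal}

lemma convex_setOf_ne_top (hW : ConvexE W) : Convex ℝ {x | W x ≠ ⊤} := by
  intro x hx y hy a b ha hb hab
  obtain rfl : b = 1 - a := by linarith
  have hcoe {c : ℝ} (hc : 0 ≤ c) {z : En n} (hz : W z ≠ ⊤) : (c : EReal) * W z ≠ ⊤ :=
    (EReal.mul_ne_top _ _).2
      ⟨.inl (EReal.coe_ne_bot _), .inl (EReal.coe_nonneg.2 hc), .inl (EReal.coe_ne_top _), .inr hz⟩
  exact ne_top_of_le_ne_top (EReal.add_ne_top (hcoe ha hx) (hcoe hb hy)) (hW x y a ha (by linarith))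

lemma convexOn_toReal (hW : ConvexE W) (hWbot : ∀ x, W x ≠ ⊥) :
    ConvexOn ℝ {x | W x ≠ ⊤} fun x => (W x).toReal := by
  refine ⟨hW.convex_setOf_ne_top, fun x hx y hy a b ha hb hab => ?_⟩
  obtain rfl : b = 1 - a := by linarith
  have h := hW x y a ha (by linarith)
  rw [← EReal.coe_toReal hx (hWbot x), ← EReal.coe_toReal hy (hWbot y), ← EReal.coe_mul,
    ← EReal.coe_mul, ← EReal.coe_add] at h
  exact EReal.toReal_le_toReal h (hWbot _) (EReal.coe_ne_top _)

lemma expNeg_rpow_mul_rpow_le (hW : ConvexE W) {t : ℝ} (ht0 : 0 < t) (ht1 : t < 1) (y₀ y₁ : En n) :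
    expNeg (W y₀) ^ (1 - t) * expNeg (W y₁) ^ t ≤ expNeg (W ((1 - t) • y₀ + t • y₁)) := by
  have h := hW y₀ y₁ (1 - t) (by linarith) (by linarith)
  rw [sub_sub_cancel] at h
  exact (_root_.expNeg_rpow_mul_rpow_le ht0 ht1 _ _).trans (expNeg_antitone h)

lemma exists_measurable_logConcave_ae_eq_expNeg (hW : ConvexE W) (hWbot : ∀ x, W x ≠ ⊥) :
    ∃ g : En n → ℝ≥0∞, Measurable g ∧ g =ᵐ[volume] (fun x => expNeg (W x)) ∧
      ∀ ⦃t : ℝ⦄, 0 < t → t < 1 → ∀ y₀ y₁ : En n,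
        g y₀ ^ (1 - t) * g y₁ ^ t ≤ g ((1 - t) • y₀ + t • y₁) := by
  set D := {x | W x ≠ ⊤}
  have hD : Convex ℝ D := hW.convex_setOf_ne_top
  -- `expNeg ∘ W` need not be measurable (a convex set need not be Borel), so we discard the
  -- boundary of its domain, which is Lebesgue-null.
  refine ⟨(interior D).indicator fun x => expNeg (W x), ?_, ?_, ?_⟩
  · have hcont : ContinuousOn (fun x => expNeg (W x)) (interior D) := by
      refine (ENNReal.continuous_ofReal.comp_continuousOn
        ((hW.convexOn_toReal hWbot).continuousOn_interior.neg.rexp)).congr fun x hx => ?_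
      rw [Function.comp_apply, Pi.neg_apply, ← expNeg_coe,
        EReal.coe_toReal (interior_subset hx) (hWbot x)]
    rw [← piecewise_eq_indicator]
    exact hcont.measurable_piecewise continuousOn_const isOpen_interior.measurableSet
  · refine measure_mono_null (fun x hx => ?_) (hD.addHaar_frontier volume)
    by_contra hfr
    by_cases hint : x ∈ interior D
    · exact hx (indicator_of_mem hint _)
    · have hcl : x ∉ closure D := fun h => hfr ⟨h, hint⟩
      have hWx : W x = ⊤ := not_not.1 fun h => hcl (subset_closure h)
      exact hx (by simp [hWx, expNeg])
  · intro t ht0 ht1 y₀ y₁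
    by_cases hy₀ : y₀ ∈ interior D
    · by_cases hy₁ : y₁ ∈ interior D
      · rw [indicator_of_mem hy₀, indicator_of_mem hy₁,
          indicator_of_mem (hD.interior hy₀ hy₁ (by linarith) ht0.le (by ring))]
        exact hW.expNeg_rpow_mul_rpow_le ht0 ht1 y₀ y₁
      · simp [indicator_of_notMem hy₁, ENNReal.zero_rpow_of_pos ht0]
    · simp [indicator_of_notMem hy₀, ENNReal.zero_rpow_of_pos (sub_pos.2 ht1)]

end ConvexE

theorem statement3_general (n : ℕ) (W : En n → EReal) (hWconv : ConvexE W) (hWbot : ∀ x, W x ≠ ⊥)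
    (m : Measure (En n)) (hm : m = volume.withDensity fun x => expNeg (W x))
    (f₀ f₁ : En n → EReal) (hb₀ : ∀ x, f₀ x ≠ ⊥) (hb₁ : ∀ x, f₁ x ≠ ⊥)
    (t : ℝ) (ht0 : 0 ≤ t) (ht1 : t ≤ 1) :
    intExpNeg m (legendre f₀) ^ (1 - t) * intExpNeg m (legendre f₁) ^ t
      ≤ intExpNeg m (legendre fun x => ((1 - t : ℝ) : EReal) * f₀ x + (t : EReal) * f₁ x) := by
  rcases ht0.eq_or_lt with rfl | ht0
  · simp
  rcases ht1.eq_or_lt with rfl | ht1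
  · simp
  obtain ⟨g, hg, hgW, hg_logConcave⟩ := hWconv.exists_measurable_logConcave_ae_eq_expNeg hWbot
  have hmeas (f : En n → EReal) : Measurable (expNeg ∘ legendre f) :=
    measurable_expNeg.comp (lowerSemicontinuous_legendre f).measurable
  have hint (f : En n → EReal) : intExpNeg m (legendre f) = ∫⁻ y, g y * expNeg (legendre f y) := by
    rw [hm, withDensity_congr_ae hgW.symm]
    exact lintegral_withDensity_eq_lintegral_mul _ hg (hmeas f)
  rw [hint, hint, hint]
  refine prekopaLeindler_volume_euclideanSpace n ht0 ht1 (hg.mul (hmeas _)) (hg.mul (hmeas _))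
    (hg.mul (hmeas _)) fun y₀ y₁ => ?_
  rw [ENNReal.mul_rpow_of_nonneg _ _ (sub_pos.2 ht1).le, ENNReal.mul_rpow_of_nonneg _ _ ht0.le,
    mul_mul_mul_comm]
  exact mul_le_mul' (hg_logConcave ht0 ht1 y₀ y₁) ((expNeg_rpow_mul_rpow_le ht0 ht1 _ _).trans
    (expNeg_antitone (legendre_convexComb_le ht0 ht1 hb₀ hb₁ y₀ y₁)))

/-- If `m = e^{-W} dx` is a log-concave measure, then for any measurable
`f₀, f₁ : ℝⁿ → ℝ ∪ {+∞}` and `t ∈ [0,1]`,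
`∫ e^{-((1-t)f₀ + t f₁)*} dm ≥ (∫ e^{-f₀*} dm)^{1-t} (∫ e^{-f₁*} dm)^t`. -/
theorem statement3 (n : ℕ) (W : En n → EReal) (hWconv : ConvexE W) (hWbot : ∀ x, W x ≠ ⊥)
    (m : Measure (En n)) (hm : m = volume.withDensity fun x => expNeg (W x))
    (f₀ f₁ : En n → EReal) (hf₀ : Measurable f₀) (hf₁ : Measurable f₁)
    (hb₀ : ∀ x, f₀ x ≠ ⊥) (hb₁ : ∀ x, f₁ x ≠ ⊥)
    (t : ℝ) (ht0 : 0 ≤ t) (ht1 : t ≤ 1) :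
    intExpNeg m (legendre f₀) ^ (1 - t) * intExpNeg m (legendre f₁) ^ t
      ≤ intExpNeg m (legendre fun x => ((1 - t : ℝ) : EReal) * f₀ x + (t : EReal) * f₁ x) :=
  statement3_general n W hWconv hWbot m hm f₀ f₁ hb₀ hb₁ t ht0 ht1

end
end

section
/- Let m be a Borel measure on ℝⁿ that is finite on compact sets. For any ν ∈ P₁(ℝⁿ), the supremum defining K(ν|m) can be restricted to convex Lipschitz functions: K(ν|m) = sup over convex Lipschitz f : ℝⁿ → ℝ of {∫ (−f) dν + log ∫ e^{−f*} dm}. -/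
open MeasureTheory Real Filter Set
attribute [local instance] Classical.propDecidable
open scoped ENNReal NNReal Topology

noncomputable section

lemma elog_eq_log : elog = ENNReal.log := by
  ext x
  rcases eq_or_ne x 0 with rfl | h0
  · simp [elog, ENNReal.log]
  rcases eq_or_ne x ⊤ with rfl | htop
  · simp [elog, ENNReal.log]
  · simp [elog, ENNReal.log, h0, htop]

lemma elog_monotone : Monotone elog :=
  elog_eq_log ▸ ENNReal.log_monotone

lemma tendsto_setLIntegral_closedBall {E : Type*} [PseudoMetricSpace E] [MeasurableSpace E]
    [OpensMeasurableSpace E] (m : Measure E) (φ : E → ℝ≥0∞) (x : E) :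
    Tendsto (fun k : ℕ => ∫⁻ y in Metric.closedBall x k, φ y ∂m) atTop (𝓝 (∫⁻ y, φ y ∂m)) := by
  have hmono : Monotone fun k : ℕ => Metric.closedBall x k := fun _ _ hkl =>
    Metric.closedBall_subset_closedBall (by exact_mod_cast hkl)
  have h := tendsto_measure_iUnion_atTop (μ := m.withDensity φ) hmono
  rw [Metric.iUnion_closedBall_nat, withDensity_apply _ MeasurableSet.univ,
    Measure.restrict_univ] at h
  refine h.congr fun k => ?_
  exact withDensity_apply _ Metric.isClosed_closedBall.measurableSet

section LipEnvelope

variable {α : Type*} [PseudoMetricSpace α]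

/-- The Pasch–Hausdorff envelope of `f`. -/
def lipEnvelope (L : ℝ≥0) (f : α → EReal) (x : α) : EReal :=
  ⨅ z, f z + ((L * dist x z : ℝ) : EReal)

variable {L : ℝ≥0} {f : α → EReal}

lemma lipEnvelope_le (x z : α) : lipEnvelope L f x ≤ f z + ((L * dist x z : ℝ) : EReal) :=
  iInf_le _ z

lemma lipEnvelope_le_self (x : α) : lipEnvelope L f x ≤ f x := by
  simpa using lipEnvelope_le (L := L) (f := f) x x

lemma lipEnvelope_ne_top {x₀ : α} (hx₀ : f x₀ ≠ ⊤) (x : α) : lipEnvelope L f x ≠ ⊤ :=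
  ((lipEnvelope_le x x₀).trans_lt (EReal.add_lt_top hx₀ (EReal.coe_ne_top _))).ne

lemma lipEnvelope_le_add_dist (x y : α) :
    lipEnvelope L f x ≤ lipEnvelope L f y + ((L * dist x y : ℝ) : EReal) := by
  rw [← EReal.sub_le_iff_le_add (Or.inl (EReal.coe_ne_bot _)) (Or.inl (EReal.coe_ne_top _))]
  refine le_iInf fun z => ?_
  rw [EReal.sub_le_iff_le_add (Or.inl (EReal.coe_ne_bot _)) (Or.inl (EReal.coe_ne_top _)),
    add_assoc, ← EReal.coe_add]
  refine (lipEnvelope_le x z).trans (add_le_add_right ?_ _)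
  have := dist_triangle x y z
  exact_mod_cast (by nlinarith [L.2] : (L : ℝ) * dist x z ≤ L * dist y z + L * dist x y)

lemma exists_add_dist_lt_of_lipEnvelope_lt (hf : ∀ z, f z ≠ ⊥) {x : α} {c : ℝ}
    (h : lipEnvelope L f x < c) : ∃ z, ∃ r : ℝ, f z = r ∧ r + L * dist x z < c := by
  obtain ⟨z, hz⟩ := iInf_lt_iff.1 h
  have hz_top : f z ≠ ⊤ := by
    rintro hz_top
    rw [hz_top, EReal.top_add_coe] at hz
    exact not_top_lt hz
  refine ⟨z, (f z).toReal, (EReal.coe_toReal hz_top (hf z)).symm, ?_⟩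
  rw [← EReal.coe_toReal hz_top (hf z), ← EReal.coe_add] at hz
  exact_mod_cast hz

lemma coe_toReal_lipEnvelope {x₀ : α} (hx₀ : f x₀ ≠ ⊤) (hbot : ∀ x, lipEnvelope L f x ≠ ⊥)
    (x : α) : ((lipEnvelope L f x).toReal : EReal) = lipEnvelope L f x :=
  EReal.coe_toReal (lipEnvelope_ne_top hx₀ x) (hbot x)

lemma lipschitzWith_toReal_lipEnvelope {x₀ : α} (hx₀ : f x₀ ≠ ⊤)
    (hbot : ∀ x, lipEnvelope L f x ≠ ⊥) :
    LipschitzWith L fun x => (lipEnvelope L f x).toReal := by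
  refine LipschitzWith.of_le_add_mul L fun x y => ?_
  have h := lipEnvelope_le_add_dist (L := L) (f := f) x y
  rw [← coe_toReal_lipEnvelope hx₀ hbot x, ← coe_toReal_lipEnvelope hx₀ hbot y] at h
  exact_mod_cast h

end LipEnvelope

section LipEnvelopeLegendre

variable {n : ℕ} {L : ℝ≥0} {f : En n → EReal}

lemma convexOn_toReal_lipEnvelope (hf : ConvexE f) (hf_bot : ∀ z, f z ≠ ⊥) {x₀ : En n}
    (hx₀ : f x₀ ≠ ⊤) (hbot : ∀ x, lipEnvelope L f x ≠ ⊥) :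
    ConvexOn ℝ univ fun x => (lipEnvelope L f x).toReal := by
  refine ⟨convex_univ, fun x _ y _ a b ha hb hab => ?_⟩
  obtain rfl : b = 1 - a := by linarith
  set g := fun x => (lipEnvelope L f x).toReal
  have hg := coe_toReal_lipEnvelope hx₀ hbot
  have approx : ∀ x, ∀ ε > 0, ∃ z, ∃ r : ℝ, f z = r ∧ r + L * ‖x - z‖ < g x + ε := by
    intro x ε hε
    simpa only [dist_eq_norm] using exists_add_dist_lt_of_lipEnvelope_lt hf_bot
      ((hg x).symm.trans_lt (EReal.coe_lt_coe_iff.2 (lt_add_of_pos_right (g x) hε)))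
  refine le_of_forall_pos_le_add fun ε hε => ?_
  obtain ⟨z₁, r₁, hr₁, h₁⟩ := approx x ε hε
  obtain ⟨z₂, r₂, hr₂, h₂⟩ := approx y ε hε
  have hconv : f (a • z₁ + (1 - a) • z₂) ≤ ((a * r₁ + (1 - a) * r₂ : ℝ) : EReal) := by
    have := hf z₁ z₂ a ha (by linarith)
    rw [hr₁, hr₂] at this
    exact_mod_cast this
  have hnorm : ‖(a • x + (1 - a) • y) - (a • z₁ + (1 - a) • z₂)‖
      ≤ a * ‖x - z₁‖ + (1 - a) * ‖y - z₂‖ := by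
    calc _ = ‖a • (x - z₁) + (1 - a) • (y - z₂)‖ := by congr 1; module
      _ ≤ _ := by
        refine (norm_add_le _ _).trans_eq ?_
        rw [norm_smul, norm_smul, Real.norm_of_nonneg ha, Real.norm_of_nonneg hb]
  have hle : (g (a • x + (1 - a) • y) : EReal)
      ≤ ((a * r₁ + (1 - a) * r₂ + L * (a * ‖x - z₁‖ + (1 - a) * ‖y - z₂‖) : ℝ) : EReal) := by
    rw [hg, EReal.coe_add]
    refine (lipEnvelope_le _ _).trans (add_le_add hconv ?_)
    rw [dist_eq_norm]
    exact EReal.coe_le_coe_iff.2 (mul_le_mul_of_nonneg_left hnorm L.2)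
  have := EReal.coe_le_coe_iff.1 hle
  simp only [smul_eq_mul] at this ⊢
  nlinarith [mul_le_mul_of_nonneg_left h₁.le ha, mul_le_mul_of_nonneg_left h₂.le hb]

lemma inner_sub_legendre_le_lipEnvelope {y : En n} (hy : ‖y‖ ≤ L) (x : En n) :
    ((inner ℝ x y : ℝ) : EReal) - legendre f y ≤ lipEnvelope L f x := by
  refine le_iInf fun z => ?_
  have hFY : ((inner ℝ z y : ℝ) : EReal) - f z ≤ legendre f y :=
    le_iSup (fun z => ((inner ℝ z y : ℝ) : EReal) - f z) z
  have hCS : inner ℝ x y - inner ℝ z y ≤ L * dist x z := by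
    rw [← inner_sub_left, dist_eq_norm]
    exact (real_inner_le_norm _ _).trans (by rw [mul_comm]; gcongr)
  generalize f z = a at hFY ⊢
  generalize legendre f y = b at hFY ⊢
  induction a using EReal.rec with
  | bot => simp_all
  | top => rw [EReal.top_add_coe]; exact le_top
  | coe a =>
    induction b using EReal.rec with
    | bot => simp [← EReal.coe_sub] at hFY
    | top => simp
    | coe b =>
      norm_cast at hFY ⊢
      linarith

lemma lipEnvelope_ne_bot {y₀ : En n} (hy₀ : legendre f y₀ ≠ ⊤) (hL : ‖y₀‖ ≤ L) (x : En n) :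
    lipEnvelope L f x ≠ ⊥ := by
  intro h
  have := inner_sub_legendre_le_lipEnvelope (f := f) hL x
  rw [h, le_bot_iff] at this
  generalize legendre f y₀ = b at hy₀ this
  induction b using EReal.rec with
  | bot => simp at this
  | top => exact hy₀ rfl
  | coe b => simp [← EReal.coe_sub] at this

lemma legendre_coe_le_of_inner_sub_le {g : En n → ℝ} {y : En n}
    (h : ∀ x, ((inner ℝ x y : ℝ) : EReal) - legendre f y ≤ g x) :
    legendre (fun x => (g x : EReal)) y ≤ legendre f y := by
  refine iSup_le fun x => ?_
  have := h x
  rwa [EReal.sub_le_iff_le_add (Or.inr (EReal.coe_ne_top _)) (Or.inr (EReal.coe_ne_bot _)),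
    add_comm, ← EReal.sub_le_iff_le_add (Or.inl (EReal.coe_ne_bot _))
      (Or.inl (EReal.coe_ne_top _))] at this

lemma exists_convex_lipschitz_minorant (hf : IsF f) {y₀ : En n} (hy₀ : legendre f y₀ ≠ ⊤)
    (hL : ‖y₀‖ ≤ L) :
    ∃ g : En n → ℝ, ConvexOn ℝ univ g ∧ LipschitzWith L g ∧ (∀ x, (g x : EReal) ≤ f x) ∧
      ∀ y, ‖y‖ ≤ L → legendre (fun x => (g x : EReal)) y ≤ legendre f y := by
  obtain ⟨-, hconv, ⟨x₀, hx₀⟩, hf_bot⟩ := hf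
  have hbot := lipEnvelope_ne_bot hy₀ hL
  have hg := coe_toReal_lipEnvelope hx₀ hbot
  refine ⟨fun x => (lipEnvelope L f x).toReal,
    convexOn_toReal_lipEnvelope hconv hf_bot hx₀ hbot, lipschitzWith_toReal_lipEnvelope hx₀ hbot,
    fun x => (hg x).trans_le (lipEnvelope_le_self x), fun y hy => ?_⟩
  exact legendre_coe_le_of_inner_sub_le fun x =>
    (inner_sub_legendre_le_lipEnvelope hy x).trans_eq (hg x).symm

end LipEnvelopeLegendre

section Functional

variable {n : ℕ}

lemma isF_coe_of_convexOn {g : En n → ℝ} (hg : ConvexOn ℝ univ g) (hc : Continuous g) :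
    IsF fun x => (g x : EReal) := by
  refine ⟨(continuous_coe_real_ereal.comp hc).lowerSemicontinuous, fun x y t ht ht1 => ?_,
    ⟨0, EReal.coe_ne_top _⟩, fun x => EReal.coe_ne_bot _⟩
  have := hg.2 (mem_univ x) (mem_univ y) ht (sub_nonneg.2 ht1) (add_sub_cancel t 1)
  simp only [smul_eq_mul] at this
  show ((g (t • x + (1 - t) • y) : ℝ) : EReal) ≤ (t : EReal) * g x + ((1 - t : ℝ) : EReal) * g y
  exact_mod_cast this

lemma MemP1.integrable_of_lipschitzWith {ν : Measure (En n)} (hν : MemP1 ν) {L : ℝ≥0}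
    {g : En n → ℝ} (hg : LipschitzWith L g) : Integrable g ν := by
  have := hν.1
  have hnorm : Integrable (fun x : En n => ‖x‖) ν :=
    Integrable.norm ⟨aestronglyMeasurable_id, hν.2.lt_top⟩
  refine ((integrable_const ‖g 0‖).add (hnorm.const_mul L)).mono'
    hg.continuous.aestronglyMeasurable (ae_of_all _ fun x => ?_)
  have := hg.dist_le_mul x 0
  rw [Real.dist_eq, dist_zero_right] at this
  show |g x| ≤ |g 0| + L * ‖x‖
  linarith [abs_sub_abs_le_abs_sub (g x) (g 0)]

def KfunLip (ν m : Measure (En n)) : EReal :=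
  ⨆ (f : En n → ℝ) (_ : ConvexOn ℝ Set.univ f ∧ ∃ L : ℝ≥0, LipschitzWith L f),
    ((-(∫ x, f x ∂ν) : ℝ) : EReal) + elog (intExpNeg m (legendre fun x => ((f x : ℝ) : EReal)))

lemma le_KfunLip {ν : Measure (En n)} (hν : MemP1 ν) (m : Measure (En n)) {f : En n → EReal}
    (hf : IsF f) (hf_ae : ∀ᵐ x ∂ν, f x ≠ ⊤) (hf_int : Integrable (fun x => (f x).toReal) ν) :
    ((-(∫ x, (f x).toReal ∂ν) : ℝ) : EReal) + elog (intExpNeg m (legendre f)) ≤ KfunLip ν m := by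
  by_cases hdeg : ∀ y, legendre f y = ⊤
  · simp [intExpNeg, hdeg, expNeg, elog]
  push Not at hdeg
  obtain ⟨y₀, hy₀⟩ := hdeg
  choose g hg_conv hg_lip hg_le hg_legendre using fun k : ℕ =>
    exists_convex_lipschitz_minorant (L := ‖y₀‖₊ + k) hf hy₀ (by simp)
  set r : ℝ := -∫ x, (f x).toReal ∂ν
  have hlim : Tendsto
      (fun k : ℕ => (r : EReal) + elog (∫⁻ y in Metric.closedBall 0 k, expNeg (legendre f y) ∂m))
      atTop (𝓝 ((r : EReal) + elog (intExpNeg m (legendre f)))) := by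
    rw [elog_eq_log]
    refine (EReal.continuousAt_add (Or.inl (EReal.coe_ne_top r))
      (Or.inl (EReal.coe_ne_bot r))).tendsto.comp (tendsto_const_nhds.prodMk_nhds ?_)
    exact (ENNReal.continuous_log.tendsto _).comp (tendsto_setLIntegral_closedBall m _ 0)
  refine le_of_tendsto' hlim fun k => le_iSup₂_of_le (g k) ⟨hg_conv k, _, hg_lip k⟩ ?_
  refine add_le_add ?_ (elog_monotone ?_)
  · refine EReal.coe_le_coe_iff.2 (neg_le_neg (integral_mono_ae
      (hν.integrable_of_lipschitzWith (hg_lip k)) hf_int (hf_ae.mono fun x hx => ?_)))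
    simpa using EReal.toReal_le_toReal (hg_le k x) (EReal.coe_ne_bot _) hx
  · calc ∫⁻ y in Metric.closedBall 0 k, expNeg (legendre f y) ∂m
        ≤ ∫⁻ y in Metric.closedBall 0 k, expNeg (legendre (fun x => (g k x : EReal)) y) ∂m := by
          refine lintegral_mono_ae (ae_restrict_of_forall_mem
            Metric.isClosed_closedBall.measurableSet fun y hy => expNeg_antitone (hg_legendre k y ?_))
          rw [mem_closedBall_zero_iff] at hy
          push_cast
          linarith [norm_nonneg y₀]
      _ ≤ intExpNeg m (legendre fun x => (g k x : EReal)) := setLIntegral_le_lintegral _ _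

end Functional

theorem statement5_general (n : ℕ) (m : Measure (En n))
    (ν : Measure (En n)) (hν : MemP1 ν) :
    Kfun ν m =
      ⨆ (f : En n → ℝ) (_ : ConvexOn ℝ Set.univ f ∧ ∃ L : ℝ≥0, LipschitzWith L f),
        ((-(∫ x, f x ∂ν) : ℝ) : EReal)
          + elog (intExpNeg m (legendre fun x => ((f x : ℝ) : EReal))) := by
  apply le_antisymm
  · exact iSup₂_le fun f ⟨hf, hf_ae, hf_int⟩ => le_KfunLip hν m hf hf_ae hf_int
  · refine iSup₂_le fun g ⟨hg, L, hgL⟩ => le_iSup₂_of_le (fun x => (g x : EReal))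
      ⟨isF_coe_of_convexOn hg hgL.continuous, ae_of_all _ fun x => EReal.coe_ne_top _,
        hν.integrable_of_lipschitzWith hgL⟩ ?_
    simp only [EReal.toReal_coe, le_refl]

/-- For any Borel measure `m` finite on compact sets and any `ν ∈ P₁(ℝⁿ)`,
the supremum defining `K(ν|m)` can be restricted to convex Lipschitz functions. -/
theorem statement5 (n : ℕ) (m : Measure (En n)) [IsFiniteMeasureOnCompacts m]
    (ν : Measure (En n)) (hν : MemP1 ν) :
    Kfun ν m =
      ⨆ (f : En n → ℝ) (_ : ConvexOn ℝ Set.univ f ∧ ∃ L : ℝ≥0, LipschitzWith L f),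
        ((-(∫ x, f x ∂ν) : ℝ) : EReal)
          + elog (intExpNeg m (legendre fun x => ((f x : ℝ) : EReal))) :=
  statement5_general n m ν hν

end
end
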